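/- For 1 ≤ k ≤ n−2, 1 ≤ p ≤ n−k−1, and q = n−p−k, the distance Laplacian spectrum of K(n,k,p) = K_k ▽ (K_p ∪ K_q) is {0, n+p+q, n with multiplicity k, n+q with multiplicity p−1, n+p with multiplicity q−1}. -/

import Mathlib

open Matrix BigOperators
open scoped Classical

/-- The spectral radius of a real square matrix: the largest modulus of a
(complex) eigenvalue. -/
noncomputable def specRad {n : Type*} [Fintype n] [DecidableEq n]
    (A : Matrix n n ℝ) : ℝ :=
  ⨆ μ : spectrum ℂ (A.map Complex.ofReal), ‖μ.val‖

/-- `reachIn A k u v` : there is a walk of length `k` from `u` to `v`. -/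
def reachIn {V : Type*} (A : V → V → Prop) : ℕ → V → V → Prop
  | 0 => fun u v => u = v
  | (k + 1) => fun u v => ∃ w, A u w ∧ reachIn A k w v

/-- The induced subgraph of `G` on the set `s` is connected: any two vertices of `s`
are joined by a walk staying inside `s`. -/
def ConnOn {V : Type*} (G : SimpleGraph V) (s : Set V) : Prop :=
  ∀ u ∈ s, ∀ v ∈ s, ∃ k : ℕ, reachIn (fun a b => G.Adj a b ∧ a ∈ s ∧ b ∈ s) k u v

/-- The graph has vertex connectivity `k`: deleting any fewer than `k` vertices leaves
a connected graph, and some set of `k` vertices disconnects it. -/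
def GVertexConnEq {V : Type*} [Fintype V] [DecidableEq V]
    (G : SimpleGraph V) (k : ℕ) : Prop :=
  (∀ S : Finset V, S.card < k → ConnOn G {v | v ∉ S}) ∧
  (∃ S : Finset V, S.card = k ∧ ¬ ConnOn G {v | v ∉ S})

/-- The graph `K(n,k,p) = K_k ▽ (K_p ∪ K_{n-p-k})`: vertices `0,…,p-1` form `K_p`,
vertices `p,…,p+k-1` form `K_k`, the rest form `K_{n-p-k}`; all pairs of distinct
vertices are adjacent except pairs with one vertex in `K_p` and the other in
`K_{n-p-k}`. -/
def Kgraph (n k p : ℕ) : SimpleGraph (Fin n) where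
  Adj u v := u ≠ v ∧
    ¬(((u : ℕ) < p ∧ p + k ≤ (v : ℕ)) ∨ ((v : ℕ) < p ∧ p + k ≤ (u : ℕ)))
  symm := ⟨by rintro u v ⟨h1, h2⟩; exact ⟨h1.symm, by tauto⟩⟩
  loopless := ⟨fun u h => h.1 rfl⟩

open Polynomial

/-- The distance matrix of `K(n,k,p)`: distance `2` between `K_p` and `K_{n-p-k}`,
distance `1` between any other pair of distinct vertices. -/
noncomputable def dMatKgraph (n k p : ℕ) : Matrix (Fin n) (Fin n) ℝ :=
  fun u v =>
    if u = v then 0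
    else if ((u : ℕ) < p ∧ p + k ≤ (v : ℕ)) ∨ ((v : ℕ) < p ∧ p + k ≤ (u : ℕ)) then 2
    else 1

/-- The distance Laplacian `𝓛 = Tr - 𝓓` of `K(n,k,p)`, with `Tr` the diagonal matrix
of transmissions (row sums of the distance matrix). -/
noncomputable def dLapKgraph (n k p : ℕ) : Matrix (Fin n) (Fin n) ℝ :=
  Matrix.diagonal (fun u => ∑ w, dMatKgraph n k p u w) - dMatKgraph n k p

/-!
The partition of the vertices into `K_p`, `K_k`, `K_q` is equitable: the distance between two
distinct vertices only depends on their parts, so `𝓓 = W.submatrix b b - 1` for the part map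
`b` and a `3 × 3` matrix `W`, and `𝓛 = diag (Λ ∘ b) - W.submatrix b b` where `Λ = W *ᵥ s`
with `s` the vector of part sizes. Thus `x - 𝓛` is a diagonal matrix plus a perturbation of rank
at most `3`. For `x` different from every `Λⱼ` the matrix determinant lemma reduces its
determinant to a `3 × 3` one, which yields the polynomial identity
`χ(𝓛) · ∏ⱼ (X - Λⱼ) = ∏ⱼ (X - Λⱼ) ^ sⱼ · χ(B)` for the quotient matrix `B = diag Λ - W · diag s`.
Here `Λ = (n + q, n, n + p)` and `χ(B) = X (X - (n + p + q)) (X - n)`.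
-/

open Finset

def fiberCard {ι β : Type*} [Fintype ι] [DecidableEq β] (b : ι → β) (j : β) : ℕ :=
  #{u | b u = j}

lemma prod_comp_eq_prod_pow_fiberCard {ι β M : Type*} [Fintype ι] [Fintype β] [DecidableEq β]
    [CommMonoid M] (b : ι → β) (d : β → M) :
    ∏ u, d (b u) = ∏ j, d j ^ fiberCard b j := by
  simp only [← Finset.prod_fiberwise' univ b d, prod_const, fiberCard]

namespace Matrix

variable {ι β : Type*} [Fintype ι] [Fintype β] [DecidableEq β]

lemma sum_submatrix_apply_eq_mulVec_fiberCard {R : Type*} [NonAssocSemiring R] (b : ι → β)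
    (W : Matrix β β R) (u : ι) :
    ∑ v, W.submatrix b b u v = (W *ᵥ fun j => (fiberCard b j : R)) (b u) := by
  simp only [submatrix_apply, mulVec, dotProduct, fiberCard,
    ← Finset.sum_fiberwise' univ b (W (b u)), sum_const, nsmul_eq_mul']

variable [DecidableEq ι]

lemma diagonal_sum_sub_submatrix_sub_one {R : Type*} [Ring R] (b : ι → β) (W : Matrix β β R) :
    diagonal (fun u => ∑ v, (W.submatrix b b - 1) u v) - (W.submatrix b b - 1)
      = diagonal ((W *ᵥ fun j => (fiberCard b j : R)) ∘ b) - W.submatrix b b := by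
  ext u v
  simp only [sub_apply, sum_sub_distrib, sum_submatrix_apply_eq_mulVec_fiberCard, one_apply,
    Finset.sum_ite_eq, mem_univ, if_true, diagonal_apply, Function.comp_apply]
  split_ifs <;> abel

variable {K : Type*} [Field K]

theorem det_diagonal_comp_add_submatrix (b : ι → β) (d : β → K) (hd : ∀ j, d j ≠ 0)
    (W : Matrix β β K) :
    det (diagonal (d ∘ b) + W.submatrix b b)
      = (∏ j, d j ^ fiberCard b j) * det (1 + W * diagonal fun j => (fiberCard b j : K) / d j) := by
  let U : Matrix ι β K := of fun u j => if b u = j then 1 else 0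
  have hW : W.submatrix b b = U * (W * Uᵀ) := by
    ext u v
    simp [U, mul_apply]
  have hD : IsUnit (diagonal (d ∘ b)).det := by
    simp [det_diagonal, prod_ne_zero_iff, hd]
  have hUDU : Uᵀ * (diagonal (d ∘ b))⁻¹ * U = diagonal fun j => (fiberCard b j : K) / d j := by
    have hinv : (diagonal (d ∘ b))⁻¹ = diagonal fun u => (d (b u))⁻¹ :=
      inv_eq_left_inv (by simp [diagonal_mul_diagonal, hd])
    ext i j
    rw [hinv, mul_apply]
    simp only [mul_diagonal, transpose_apply, U, of_apply, diagonal_apply]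
    rcases eq_or_ne i j with rfl | hij
    · rw [if_pos rfl, fiberCard, natCast_card_filter, sum_div]
      refine sum_congr rfl fun u _ => ?_
      split_ifs with hu <;> simp [hu, div_eq_inv_mul]
    · rw [if_neg hij]
      refine sum_eq_zero fun u _ => ?_
      split_ifs with hi hj <;> simp_all
  rw [hW, det_add_mul _ _ hD, Matrix.mul_assoc, Matrix.mul_assoc, ← Matrix.mul_assoc Uᵀ, hUDU,
    det_diagonal]
  simp only [Function.comp_apply, prod_comp_eq_prod_pow_fiberCard]

theorem charpoly_diagonal_comp_sub_submatrix_mul_prod [Infinite K] (b : ι → β) (Λ : β → K)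
    (W : Matrix β β K) :
    (diagonal (Λ ∘ b) - W.submatrix b b).charpoly * ∏ j, (X - C (Λ j))
      = (∏ j, (X - C (Λ j)) ^ fiberCard b j)
        * (diagonal Λ - W * diagonal fun j => (fiberCard b j : K)).charpoly := by
  refine eq_of_infinite_eval_eq _ _ ((Set.finite_range Λ).infinite_compl.mono ?_)
  rintro x hx
  have hd : ∀ j, x - Λ j ≠ 0 := fun j h => hx ⟨j, (sub_eq_zero.1 h).symm⟩
  have hL : scalar ι x - (diagonal (Λ ∘ b) - W.submatrix b b)
      = diagonal ((fun j => x - Λ j) ∘ b) + W.submatrix b b := by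
    rw [scalar_apply, sub_sub_eq_add_sub, add_sub_right_comm, diagonal_sub]
    rfl
  have hB : scalar β x - (diagonal Λ - W * diagonal fun j => (fiberCard b j : K))
      = (1 + W * diagonal fun j => (fiberCard b j : K) / (x - Λ j))
        * diagonal fun j => x - Λ j := by
    rw [Matrix.add_mul, Matrix.one_mul, Matrix.mul_assoc, diagonal_mul_diagonal, scalar_apply,
      sub_sub_eq_add_sub, add_sub_right_comm, diagonal_sub]
    simp only [div_mul_cancel₀ _ (hd _)]
  simp only [Set.mem_ofPred_eq, eval_mul, eval_charpoly, eval_prod, eval_pow, eval_sub, eval_X,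
    eval_C]
  rw [hL, hB, det_diagonal_comp_add_submatrix _ _ hd, det_mul, det_diagonal]
  ring

end Matrix

lemma Fin.card_filter_le_val_and_val_lt {n a c : ℕ} (h : c ≤ n) :
    #{u : Fin n | a ≤ (u : ℕ) ∧ (u : ℕ) < c} = c - a := by
  rw [← Nat.card_Ico, ← card_map Fin.valEmbedding]
  congr 1
  ext i
  simp only [mem_map, mem_filter, mem_univ, true_and, Fin.valEmbedding_apply, mem_Ico]
  exact ⟨fun ⟨u, hu, hui⟩ => hui ▸ hu, fun hi => ⟨⟨i, by omega⟩, hi, rfl⟩⟩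

def kgraphPart (k p : ℕ) {n : ℕ} (u : Fin n) : Fin 3 :=
  if (u : ℕ) < p then 0 else if (u : ℕ) < p + k then 1 else 2

def kgraphPartDist : Matrix (Fin 3) (Fin 3) ℝ := !![1, 1, 2; 1, 1, 1; 2, 1, 1]

lemma dMatKgraph_eq_submatrix_sub_one (n k p : ℕ) :
    dMatKgraph n k p = kgraphPartDist.submatrix (kgraphPart k p) (kgraphPart k p) - 1 := by
  ext u v
  simp only [dMatKgraph, Matrix.sub_apply, one_apply, submatrix_apply, kgraphPart]
  split_ifs <;> simp_all [kgraphPartDist, Fin.ext_iff] <;> omega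

lemma fiberCard_kgraphPart {n k p : ℕ} (h : p + k ≤ n) :
    fiberCard (kgraphPart k p : Fin n → Fin 3) = ![p, k, n - p - k] := by
  have hcard : ∀ j a c, c ≤ n →
      (∀ u : Fin n, kgraphPart k p u = j ↔ a ≤ (u : ℕ) ∧ (u : ℕ) < c) →
      fiberCard (kgraphPart k p : Fin n → Fin 3) j = c - a := fun j a c hc hj => by
    rw [fiberCard, filter_congr fun u _ => hj u, Fin.card_filter_le_val_and_val_lt hc]
  funext j
  fin_cases j
  · exact hcard 0 0 p (by omega) fun u => by
      simp only [kgraphPart]; split_ifs <;> simp <;> omega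
  · exact (hcard 1 p (p + k) h fun u => by
      simp only [kgraphPart]; split_ifs <;> simp <;> omega).trans (by simp)
  · exact (hcard 2 (p + k) n le_rfl fun u => by
      simp only [kgraphPart]; split_ifs <;> simp <;> omega).trans (by simp [Nat.sub_sub])

lemma kgraphPartDist_mulVec {n p k q : ℝ} (hn : n = p + k + q) :
    kgraphPartDist *ᵥ ![p, k, q] = ![n + q, n, n + p] := by
  ext j
  fin_cases j <;>
    simp only [mulVec, dotProduct, Fin.sum_univ_three, kgraphPartDist, of_apply, cons_val',
      cons_val_fin_one, cons_val_zero, cons_val_one, Matrix.cons_val, Fin.zero_eta, Fin.mk_one,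
      Fin.reduceFinMk, one_mul, hn] <;>
    ring

lemma charpoly_kgraphQuotient {n p k q : ℝ} (hn : n = p + k + q) :
    (diagonal ![n + q, n, n + p] - kgraphPartDist * diagonal ![p, k, q]).charpoly
      = X * (X - C (n + p + q)) * (X - C n) := by
  have hB : diagonal ![n + q, n, n + p] - kgraphPartDist * diagonal ![p, k, q]
      = !![n + q - p, -k, -(2 * q); -p, n - k, -q; -(2 * p), -k, n + p - q] := by
    ext i j
    simp only [Matrix.sub_apply, mul_diagonal, diagonal_apply]
    fin_cases i <;> fin_cases j <;> simp [kgraphPartDist]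
  rw [hB, charpoly, det_fin_three]
  simp only [hn, charmatrix_apply_eq, charmatrix_apply_ne, ne_eq, Fin.reduceEq, not_false_eq_true,
    of_apply, cons_val', cons_val_zero, cons_val_one, cons_val_fin_one, Matrix.cons_val, map_sub,
    map_add, map_neg, map_mul, map_ofNat, neg_neg]
  ring

theorem distLap_spectrum_Kgraph_general (n k p q : ℕ)
    (hp1 : 1 ≤ p) (hp2 : p ≤ n - k - 1) (hq : q = n - p - k) :
    (dLapKgraph n k p).charpoly
      = X * (X - C ((n : ℝ) + p + q)) * (X - C (n : ℝ)) ^ k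
        * (X - C ((n : ℝ) + q)) ^ (p - 1) * (X - C ((n : ℝ) + p)) ^ (q - 1) := by
  have hn : (n : ℝ) = p + k + q := by norm_cast; omega
  have hsizes : (fun j => (fiberCard (kgraphPart k p : Fin n → Fin 3) j : ℝ))
      = ![(p : ℝ), k, q] := by
    rw [fiberCard_kgraphPart (by omega), ← hq]
    ext j; fin_cases j <;> rfl
  have key := charpoly_diagonal_comp_sub_submatrix_mul_prod (kgraphPart k p : Fin n → Fin 3)
    (kgraphPartDist *ᵥ fun j => (fiberCard (kgraphPart k p : Fin n → Fin 3) j : ℝ))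
    kgraphPartDist
  rw [← diagonal_sum_sub_submatrix_sub_one, ← dMatKgraph_eq_submatrix_sub_one, ← dLapKgraph,
    hsizes, kgraphPartDist_mulVec hn, fiberCard_kgraphPart (by omega), ← hq,
    charpoly_kgraphQuotient hn] at key
  refine mul_right_cancel₀ (prod_ne_zero_iff.2 fun j _ => X_sub_C_ne_zero _) (key.trans ?_)
  obtain ⟨p', rfl⟩ : ∃ p', p = p' + 1 := ⟨p - 1, by omega⟩
  obtain ⟨q', rfl⟩ : ∃ q', q = q' + 1 := ⟨q - 1, by omega⟩
  simp only [Fin.prod_univ_three, cons_val_zero, cons_val_one, Matrix.cons_val, Nat.cast_add,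
    Nat.cast_one, map_add, map_natCast, map_one, add_tsub_cancel_right]
  ring

/-- For `1 ≤ k ≤ n-2`, `1 ≤ p ≤ n-k-1` and `q = n-p-k`, the distance
Laplacian spectrum of `K(n,k,p) = K_k ▽ (K_p ∪ K_q)` is
`{0, n+p+q, n^{[k]}, (n+q)^{[p-1]}, (n+p)^{[q-1]}}`, via the characteristic
polynomial. -/
theorem distLap_spectrum_Kgraph (n k p q : ℕ) (hk1 : 1 ≤ k) (hk2 : k ≤ n - 2)
    (hp1 : 1 ≤ p) (hp2 : p ≤ n - k - 1) (hq : q = n - p - k) :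
    (dLapKgraph n k p).charpoly
      = X * (X - C ((n : ℝ) + p + q)) * (X - C (n : ℝ)) ^ k
        * (X - C ((n : ℝ) + q)) ^ (p - 1) * (X - C ((n : ℝ) + p)) ^ (q - 1) :=
  distLap_spectrum_Kgraph_general n k p q hp1 hp2 hq
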